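/- Let R be a unital ring with n invertible, ω a central unit with ω^n = 1 and ω^i - ω^j a unit for all 0 ≤ i ≠ j ≤ n-1. Suppose there exist a, b ∈ R with u := ab - ba satisfying u^n = 1, and suppose there exists a unit v ∈ R with v u v^{-1} = ω^{-1} u. Then R ≅ M_n(S) for S = e_0 R e_0, where e_0 = (1/n)(1 + u + u^2 + ··· + u^{n-1}). -/

import Mathlib

/-!
Since `u ^ n = 1` and `n` is invertible, `e₀ = n⁻¹ ∑ uʲ` is an idempotent with
`u e₀ = e₀ = e₀ u`. With `w = v⁻¹` we have `w u = ω u w`, and the elements `xᵢ = wⁱ e₀`,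
`yᵢ = e₀ w⁻ⁱ` (`i < n`) are matrix units: `yᵢ xⱼ = δᵢⱼ e₀` and `∑ xᵢ yᵢ = 1`, so
`r ↦ (yᵢ r xⱼ)ᵢⱼ` identifies `R` with `Mₙ(e₀ R e₀)`. For `i ≠ j` the element `a = w⁻ⁱ wʲ`
satisfies `ωⁱ a u = ωʲ u a`, which forces `e₀ a e₀ = 0` because `ωⁱ - ωʲ` is a unit.
Conjugating `e₀` by `wᵏ` gives `n⁻¹ ∑ⱼ ωᵏʲ uʲ`, and summing over `k` leaves only the
`j = 0` term since `∑ₖ (ωʲ)ᵏ = 0` for `0 < j < n`.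
-/

/-- The corner ring `eRe = {x : R | e * x * e = x}` of an idempotent `e`, as a
non-unital subring of `R` (it is a ring with identity `e`). -/
def cornerSubring {R : Type*} [Ring R] (e : R) (he : IsIdempotentElem e) :
    NonUnitalSubring R where
  carrier := {x | e * x * e = x}
  zero_mem' := by simp
  add_mem' := by
    intro a b ha hb
    simp only [Set.mem_setOf_eq] at *
    rw [mul_add, add_mul, ha, hb]
  neg_mem' := by
    intro a ha
    simp only [Set.mem_setOf_eq] at *
    rw [mul_neg, neg_mul, ha]
  mul_mem' := by
    intro a b ha hb
    simp only [Set.mem_setOf_eq] at *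
    have ha1 : e * a = a := by rw [← ha, ← mul_assoc, ← mul_assoc, he.eq]
    have hb1 : b * e = b := by rw [← hb, mul_assoc, he.eq]
    rw [← mul_assoc, ha1, mul_assoc, hb1]

open Finset

section Corner

variable {R : Type*} [Ring R] {e : R}

lemma mul_mul_mem_cornerSubring (he : IsIdempotentElem e) (r : R) :
    e * r * e ∈ cornerSubring e he := by
  change e * (e * r * e) * e = e * r * e
  rw [← mul_assoc, ← mul_assoc, he.eq, mul_assoc, he.eq]

lemma mul_coe_cornerSubring (he : IsIdempotentElem e) (s : cornerSubring e he) :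
    e * (s : R) = s := by
  rw [← s.2, ← mul_assoc, ← mul_assoc, he.eq]

lemma coe_cornerSubring_mul (he : IsIdempotentElem e) (s : cornerSubring e he) :
    (s : R) * e = s := by
  rw [← s.2, mul_assoc, he.eq]

end Corner

section MatrixUnits

variable {R : Type*} [Ring R] {ι : Type*} [Fintype ι] [DecidableEq ι] {e : R} {x y : ι → R}

lemma mul_eq_left_of_matrixUnits (hyx : ∀ i j, y i * x j = if i = j then e else 0)
    (hxy : ∑ i, x i * y i = 1) (i : ι) : x i * e = x i := by
  calc x i * e = ∑ k, x k * (y k * x i) := by simp [hyx]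
    _ = x i := by simp only [← mul_assoc, ← sum_mul, hxy, one_mul]

lemma mul_eq_right_of_matrixUnits (hyx : ∀ i j, y i * x j = if i = j then e else 0)
    (hxy : ∑ i, x i * y i = 1) (i : ι) : e * y i = y i := by
  calc e * y i = ∑ k, (y i * x k) * y k := by simp [hyx]
    _ = y i := by simp only [mul_assoc, ← mul_sum, hxy, mul_one]

lemma mul_mul_mem_cornerSubring_of_matrixUnits (he : IsIdempotentElem e)
    (hyx : ∀ i j, y i * x j = if i = j then e else 0) (hxy : ∑ i, x i * y i = 1)
    (r : R) (i j : ι) : y i * r * x j ∈ cornerSubring e he := by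
  change e * (y i * r * x j) * e = _
  rw [mul_assoc, mul_assoc (y i * r), mul_eq_left_of_matrixUnits hyx hxy, ← mul_assoc,
    ← mul_assoc, mul_eq_right_of_matrixUnits hyx hxy]

noncomputable def ringEquivMatrixCornerOfMatrixUnits (he : IsIdempotentElem e)
    (hyx : ∀ i j, y i * x j = if i = j then e else 0) (hxy : ∑ i, x i * y i = 1) :
    R ≃+* Matrix ι ι (cornerSubring e he) where
  toFun r := Matrix.of fun i j =>
    ⟨y i * r * x j, mul_mul_mem_cornerSubring_of_matrixUnits he hyx hxy r i j⟩
  invFun M := ∑ i, ∑ j, x i * M i j * y j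
  left_inv r := by
    calc ∑ i, ∑ j, x i * (y i * r * x j) * y j = ∑ i, ∑ j, x i * y i * r * (x j * y j) := by
          simp only [mul_assoc]
      _ = (∑ i, x i * y i) * r * ∑ j, x j * y j := by rw [sum_mul, sum_mul_sum]
      _ = r := by rw [hxy, one_mul, mul_one]
  right_inv M := by
    ext i j
    change y i * (∑ k, ∑ l, x k * M k l * y l) * x j = M i j
    calc y i * (∑ k, ∑ l, x k * M k l * y l) * x j
        = ∑ k, ∑ l, (y i * x k) * M k l * (y l * x j) := by
          simp only [mul_sum, sum_mul, mul_assoc]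
      _ = e * M i j * e := by simp [hyx]
      _ = M i j := by rw [mul_coe_cornerSubring he, coe_cornerSubring_mul he]
  map_mul' r s := by
    ext i j
    simp only [Matrix.mul_apply, Matrix.of_apply, AddSubmonoidClass.coe_finsetSum,
      MulMemClass.coe_mul]
    calc y i * (r * s) * x j = y i * r * (∑ k, x k * y k) * s * x j := by
          rw [hxy, mul_one, ← mul_assoc]
      _ = _ := by simp only [mul_sum, sum_mul, mul_assoc]
  map_add' r s := by
    ext i j
    change y i * (r + s) * x j = y i * r * x j + y i * s * x j
    rw [mul_add, add_mul]

end MatrixUnits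

lemma Commute.ringInverse_left {M₀ : Type*} [MonoidWithZero M₀] {a b : M₀} (h : Commute a b) :
    Commute (Ring.inverse a) b := by
  by_cases ha : IsUnit a
  · obtain ⟨a, rfl⟩ := ha
    rw [Ring.inverse_unit]
    exact h.units_inv_left
  · rw [Ring.inverse_non_unit _ ha]
    exact Commute.zero_left b

lemma geom_sum_eq_zero_of_pow_eq_one {R : Type*} [Ring R] {c : R} {n : ℕ} (hcn : c ^ n = 1)
    (hc : IsUnit (c - 1)) : ∑ i ∈ range n, c ^ i = 0 := by
  rw [← hc.mul_left_eq_zero, geom_sum_mul, hcn, sub_self]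

section SpectralIdempotent

variable {R : Type*} [Ring R] {n : ℕ} {u : R}

noncomputable def spectralIdempotent (n : ℕ) (u : R) : R :=
  Ring.inverse (n : R) * ∑ j ∈ range n, u ^ j

lemma spectralIdempotent_mul_self (hun : u ^ n = 1) :
    spectralIdempotent n u * u = spectralIdempotent n u := by
  have hS : (∑ j ∈ range n, u ^ j) * u = ∑ j ∈ range n, u ^ j := by
    rw [← sub_eq_zero, ← mul_sub_one, geom_sum_mul, hun, sub_self]
  rw [spectralIdempotent, mul_assoc, hS]

lemma self_mul_spectralIdempotent (hun : u ^ n = 1) :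
    u * spectralIdempotent n u = spectralIdempotent n u := by
  have hS : u * ∑ j ∈ range n, u ^ j = ∑ j ∈ range n, u ^ j := by
    rw [← sub_eq_zero, ← sub_one_mul, mul_geom_sum, hun, sub_self]
  rw [spectralIdempotent, ← mul_assoc, ← (Nat.cast_commute n u).ringInverse_left.eq, mul_assoc,
    hS]

lemma spectralIdempotent_mul_pow (hun : u ^ n = 1) (j : ℕ) :
    spectralIdempotent n u * u ^ j = spectralIdempotent n u := by
  induction j with
  | zero => rw [pow_zero, mul_one]
  | succ j ih => rw [pow_succ, ← mul_assoc, ih, spectralIdempotent_mul_self hun]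

lemma isIdempotentElem_spectralIdempotent (hninv : IsUnit (n : R)) (hun : u ^ n = 1) :
    IsIdempotentElem (spectralIdempotent n u) := by
  calc spectralIdempotent n u * spectralIdempotent n u
      = Ring.inverse (n : R) * ∑ j ∈ range n, spectralIdempotent n u * u ^ j := by
        rw [← mul_sum, ← mul_assoc, (Nat.cast_commute n _).ringInverse_left.eq, mul_assoc]
        rfl
    _ = spectralIdempotent n u := by
        simp only [spectralIdempotent_mul_pow hun, sum_const, card_range, nsmul_eq_mul]
        exact Ring.inverse_mul_cancel_left _ _ hninv

end SpectralIdempotent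

section TwistedCommutation

variable {R : Type*} [Ring R] {w : Rˣ} {c u : R}

lemma units_inv_mul_eq_of_conj_eq_inverse_mul {v : Rˣ} (hc : c ∈ Set.center R) (hcu : IsUnit c)
    (hv : (v : R) * u * ↑v⁻¹ = Ring.inverse c * u) : ↑v⁻¹ * u = c * u * ↑v⁻¹ := by
  calc ↑v⁻¹ * u = ↑v⁻¹ * ((c * Ring.inverse c) * u) := by
        rw [Ring.mul_inverse_cancel _ hcu, one_mul]
    _ = c * (↑v⁻¹ * ((v : R) * u * ↑v⁻¹)) := by
        rw [hv, mul_assoc c, ← mul_assoc, ← ((Set.mem_center_iff.mp hc).comm _).eq, mul_assoc]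
    _ = c * u * ↑v⁻¹ := by rw [mul_assoc, Units.inv_mul_cancel_left, mul_assoc]

lemma units_pow_mul_eq_of_mul_eq (hc : c ∈ Set.center R) (hw : (w : R) * u = c * u * w)
    (k : ℕ) : ↑(w ^ k) * u = c ^ k * u * ↑(w ^ k) := by
  induction k with
  | zero => simp
  | succ k ih =>
    calc ↑(w ^ (k + 1)) * u = ↑(w ^ k) * c * u * w := by
          rw [pow_succ, Units.val_mul, mul_assoc, hw, ← mul_assoc, ← mul_assoc]
      _ = c * (↑(w ^ k) * u) * w := by
          rw [← ((Set.mem_center_iff.mp hc).comm _).eq, mul_assoc c]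
      _ = c ^ (k + 1) * u * ↑(w ^ (k + 1)) := by
          rw [ih, pow_succ', pow_succ, Units.val_mul]
          simp only [mul_assoc]

lemma mul_units_inv_pow_eq_of_mul_eq (hc : c ∈ Set.center R) (hw : (w : R) * u = c * u * w)
    (k : ℕ) : u * ↑(w⁻¹ ^ k) = c ^ k * ↑(w⁻¹ ^ k) * u := by
  rw [inv_pow]
  calc u * ↑(w ^ k)⁻¹ = ↑(w ^ k)⁻¹ * (↑(w ^ k) * u) * ↑(w ^ k)⁻¹ := by
        rw [Units.inv_mul_cancel_left]
    _ = ↑(w ^ k)⁻¹ * c ^ k * u := by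
        rw [units_pow_mul_eq_of_mul_eq hc hw, mul_assoc, Units.mul_inv_cancel_right, ← mul_assoc]
    _ = c ^ k * ↑(w ^ k)⁻¹ * u := by
        rw [(((Set.mem_center_iff.mp hc).comm _).pow_left k).eq]

lemma units_pow_conj_pow_eq_of_mul_eq (hc : c ∈ Set.center R) (hw : (w : R) * u = c * u * w)
    (k j : ℕ) : ↑(w ^ k) * u ^ j * ↑(w⁻¹ ^ k) = c ^ (k * j) * u ^ j := by
  have hconj : ↑(w ^ k) * u * ↑(w ^ k)⁻¹ = c ^ k * u := by
    rw [units_pow_mul_eq_of_mul_eq hc hw, Units.mul_inv_cancel_right]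
  rw [inv_pow, ← Units.conj_pow, hconj,
    ((((Set.mem_center_iff.mp hc).comm u).pow_left k)).mul_pow, pow_mul]

end TwistedCommutation

lemma mul_mul_eq_zero_of_twisted_commute {R : Type*} [Ring R] {e u a α β : R}
    (heu : e * u = e) (hue : u * e = e) (hα : α ∈ Set.center R) (hβ : β ∈ Set.center R)
    (h : α * a * u = β * u * a) (hαβ : IsUnit (α - β)) : e * a * e = 0 := by
  have hα' := (Set.mem_center_iff.mp hα).comm
  have hβ' := (Set.mem_center_iff.mp hβ).comm
  rw [← hαβ.mul_right_eq_zero]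
  have hαe : e * (α * a * u) * e = α * (e * a * e) := by
    simp only [mul_assoc, hue]
    rw [← mul_assoc e α, ← (hα' e).eq, mul_assoc]
  have hβe : e * (β * u * a) * e = β * (e * a * e) := by
    rw [← mul_assoc e, ← mul_assoc e, ← (hβ' e).eq, mul_assoc β e u, heu]
    simp only [mul_assoc]
  rw [sub_mul, ← hαe, ← hβe, h, sub_self]

section SpectralDecomposition

variable {R : Type*} [Ring R] {n : ℕ} {w : Rˣ} {c u : R}

lemma spectralIdempotent_mul_inv_pow_mul_pow_mul (hninv : IsUnit (n : R)) (hun : u ^ n = 1)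
    (hc : c ∈ Set.center R) (hw : (w : R) * u = c * u * w)
    (hdiff : ∀ i j, i < n → j < n → i ≠ j → IsUnit (c ^ i - c ^ j))
    {i j : ℕ} (hi : i < n) (hj : j < n) :
    spectralIdempotent n u * ↑(w⁻¹ ^ i) * (↑(w ^ j) * spectralIdempotent n u) =
      if i = j then spectralIdempotent n u else 0 := by
  split_ifs with hij
  · rw [hij, inv_pow, mul_assoc, ← mul_assoc (↑(w ^ j)⁻¹ : R), Units.inv_mul, one_mul,
      (isIdempotentElem_spectralIdempotent hninv hun).eq]
  · rw [mul_assoc, ← mul_assoc (↑(w⁻¹ ^ i) : R), ← mul_assoc]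
    refine mul_mul_eq_zero_of_twisted_commute (spectralIdempotent_mul_self hun)
      (self_mul_spectralIdempotent hun) ((Submonoid.center R).pow_mem hc i)
      ((Submonoid.center R).pow_mem hc j) ?_ (hdiff i j hi hj hij)
    calc c ^ i * (↑(w⁻¹ ^ i) * ↑(w ^ j)) * u = c ^ i * ↑(w⁻¹ ^ i) * (↑(w ^ j) * u) := by
          simp only [mul_assoc]
      _ = c ^ j * (c ^ i * ↑(w⁻¹ ^ i) * u) * ↑(w ^ j) := by
          rw [units_pow_mul_eq_of_mul_eq hc hw, ← mul_assoc _ (c ^ j * u), ← mul_assoc _ (c ^ j),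
            ← (((Set.mem_center_iff.mp hc).comm _).pow_left j).eq]
          simp only [mul_assoc]
      _ = c ^ j * u * (↑(w⁻¹ ^ i) * ↑(w ^ j)) := by
          rw [← mul_units_inv_pow_eq_of_mul_eq hc hw]
          simp only [mul_assoc]

lemma sum_pow_mul_spectralIdempotent_mul_inv_pow (hn : 0 < n) (hninv : IsUnit (n : R))
    (hcn : c ^ n = 1) (hc : c ∈ Set.center R) (hw : (w : R) * u = c * u * w)
    (hdiff : ∀ i j, i < n → j < n → i ≠ j → IsUnit (c ^ i - c ^ j)) :
    ∑ k ∈ range n, ↑(w ^ k) * spectralIdempotent n u * ↑(w⁻¹ ^ k) = 1 := by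
  have hterm : ∀ k, ↑(w ^ k) * spectralIdempotent n u * ↑(w⁻¹ ^ k) =
      Ring.inverse (n : R) * ∑ j ∈ range n, c ^ (k * j) * u ^ j := by
    intro k
    rw [spectralIdempotent, ← mul_assoc, ← (Nat.cast_commute n _).ringInverse_left.eq,
      mul_assoc, mul_assoc]
    congr 1
    rw [sum_mul, mul_sum]
    simp only [← mul_assoc, units_pow_conj_pow_eq_of_mul_eq hc hw]
  have hcoef : ∀ j ∈ range n,
      (∑ k ∈ range n, c ^ (k * j)) * u ^ j = if j = 0 then (n : R) else 0 := by
    intro j hj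
    split_ifs with hj0
    · simp [hj0]
    · have hcj : IsUnit (c ^ j - 1) := by
        simpa using hdiff j 0 (mem_range.mp hj) hn hj0
      have hcjn : (c ^ j) ^ n = 1 := by rw [pow_right_comm, hcn, one_pow]
      simp only [mul_comm _ j, pow_mul]
      rw [geom_sum_eq_zero_of_pow_eq_one hcjn hcj, zero_mul]
  calc ∑ k ∈ range n, ↑(w ^ k) * spectralIdempotent n u * ↑(w⁻¹ ^ k)
      = Ring.inverse (n : R) * ∑ j ∈ range n, (∑ k ∈ range n, c ^ (k * j)) * u ^ j := by
        simp only [hterm, ← mul_sum, sum_mul]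
        rw [sum_comm]
    _ = 1 := by
        rw [sum_congr rfl hcoef, sum_ite_eq' _ _ _, if_pos (mem_range.mpr hn),
          Ring.inverse_mul_cancel _ hninv]

end SpectralDecomposition

theorem stmt_17_general (R : Type*) [Ring R] (n : ℕ) (hn : 2 ≤ n) (hninv : IsUnit (n : R))
    (ω : R) (hωc : ω ∈ Set.center R) (hωu : IsUnit ω) (hωn : ω ^ n = 1)
    (hdiff : ∀ i j, i < n → j < n → i ≠ j → IsUnit (ω ^ i - ω ^ j))
    (u : R) (hun : u ^ n = 1)
    (v : Rˣ) (hv : (v : R) * u * (↑v⁻¹ : R) = Ring.inverse ω * u) :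
    ∃ he0 : IsIdempotentElem (Ring.inverse (n : R) * ∑ j ∈ Finset.range n, u ^ j),
      Nonempty (R ≃+* Matrix (Fin n) (Fin n)
        (cornerSubring (Ring.inverse (n : R) * ∑ j ∈ Finset.range n, u ^ j) he0)) := by
  set e := spectralIdempotent n u
  have he : IsIdempotentElem e := isIdempotentElem_spectralIdempotent hninv hun
  have hw := units_inv_mul_eq_of_conj_eq_inverse_mul hωc hωu hv
  have hyx (i j : Fin n) :
      e * ↑(v⁻¹⁻¹ ^ (i : ℕ)) * (↑(v⁻¹ ^ (j : ℕ)) * e) = if i = j then e else 0 := by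
    rw [spectralIdempotent_mul_inv_pow_mul_pow_mul hninv hun hωc hw hdiff i.isLt j.isLt]
    exact if_congr Fin.val_inj rfl rfl
  have hxy : ∑ i : Fin n, ↑(v⁻¹ ^ (i : ℕ)) * e * (e * ↑(v⁻¹⁻¹ ^ (i : ℕ))) = 1 := by
    simp only [mul_assoc, ← mul_assoc e e, he.eq]
    simp only [← mul_assoc]
    rw [Fin.sum_univ_eq_sum_range (fun k => ↑(v⁻¹ ^ k) * e * ↑(v⁻¹⁻¹ ^ k)),
      sum_pow_mul_spectralIdempotent_mul_inv_pow (by omega) hninv hωn hωc hw hdiff]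
  exact ⟨he, ⟨ringEquivMatrixCornerOfMatrixUnits he hyx hxy⟩⟩

theorem stmt_17 (R : Type*) [Ring R] (n : ℕ) (hn : 2 ≤ n) (hninv : IsUnit (n : R))
    (ω : R) (hωc : ω ∈ Set.center R) (hωu : IsUnit ω) (hωn : ω ^ n = 1)
    (hdiff : ∀ i j, i < n → j < n → i ≠ j → IsUnit (ω ^ i - ω ^ j))
    (a b : R) (u : R) (hu : u = a * b - b * a) (hun : u ^ n = 1)
    (v : Rˣ) (hv : (v : R) * u * (↑v⁻¹ : R) = Ring.inverse ω * u) :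
    ∃ he0 : IsIdempotentElem (Ring.inverse (n : R) * ∑ j ∈ Finset.range n, u ^ j),
      Nonempty (R ≃+* Matrix (Fin n) (Fin n)
        (cornerSubring (Ring.inverse (n : R) * ∑ j ∈ Finset.range n, u ^ j) he0)) :=
  stmt_17_general R n hn hninv ω hωc hωu hωn hdiff u hun v hv
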